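/- arXiv:1011.4654 — 6 statements merged into one kernel-verified Lean document; each statement's English description precedes it below -/
import Mathlib

section
/- Let P be an n×n row-stochastic real matrix (nonnegative entries, every row summing to 1), let A = {a | P a a = 1} be its set of absorbing states, and assume that for every state i there exist k ≥ 0 and a ∈ A with (P^k)_{ia} > 0 (every state can reach an absorbing state). Let T be the complement of A and let Q be the T×T submatrix of P. Then there exist a natural number m ≥ 1 and a real number c < 1 such that for every transient state i ∈ T, ∑_{j ∈ T} (Q^m)_{ij} ≤ c. -/
open Finset

attribute [local instance] Classical.propDecidable

/-- For an absorbing Markov chain `P` on `Fin n` (row-stochastic,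
and from every state some absorbing state `a`, i.e. one with `P a a = 1`, is
reachable), the transient block `Q` (the submatrix of `P` on the complement `T`
of the absorbing states) satisfies a uniform contraction: there are `m ≥ 1` and
`c < 1` with `∑_{j ∈ T} (Q ^ m)_{i j} ≤ c` for every transient state `i`. -/
theorem exists_uniform_contraction_of_absorbing
    (n : ℕ) (P : Matrix (Fin n) (Fin n) ℝ)
    (hnonneg : ∀ i j, 0 ≤ P i j)
    (hrow : ∀ i, ∑ j, P i j = 1)
    (hreach : ∀ i : Fin n, ∃ (k : ℕ) (a : Fin n), P a a = 1 ∧ 0 < (P ^ k) i a) :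
    ∃ (m : ℕ) (c : ℝ), 1 ≤ m ∧ c < 1 ∧
      ∀ i : {x : Fin n // P x x ≠ 1},
        ∑ j : {x : Fin n // P x x ≠ 1},
          ((P.submatrix (Subtype.val : {x : Fin n // P x x ≠ 1} → Fin n)
              Subtype.val) ^ m) i j ≤ c := by
  classical
  set Q : Matrix {x : Fin n // P x x ≠ 1} {x : Fin n // P x x ≠ 1} ℝ :=
    P.submatrix Subtype.val Subtype.val with hQ
  -- nonnegativity of powers of P
  have hPpow : ∀ k i j, 0 ≤ (P ^ k) i j := by
    intro k
    induction k with
    | zero =>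
      intro i j
      simp only [pow_zero, Matrix.one_apply]
      split <;> norm_num
    | succ k ih =>
      intro i j
      rw [pow_succ, Matrix.mul_apply]
      exact Finset.sum_nonneg fun l _ => mul_nonneg (ih i l) (hnonneg l j)
  -- row sums of powers of P
  have hrowpow : ∀ k i, ∑ j, (P ^ k) i j = 1 := by
    intro k
    induction k with
    | zero => intro i; simp [Matrix.one_apply]
    | succ k ih =>
      intro i
      rw [pow_succ]
      simp only [Matrix.mul_apply]
      rw [Finset.sum_comm]
      simp only [← Finset.mul_sum, hrow, mul_one]
      exact ih i
  -- monotonicity of absorption probabilities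
  have hmono : ∀ a : Fin n, P a a = 1 → ∀ i : Fin n,
      Monotone (fun k => (P ^ k) i a) := by
    intro a ha i
    apply monotone_nat_of_le_succ
    intro k
    rw [pow_succ, Matrix.mul_apply]
    calc (P ^ k) i a = (P ^ k) i a * P a a := by rw [ha, mul_one]
      _ ≤ ∑ l, (P ^ k) i l * P l a :=
        Finset.single_le_sum (f := fun l => (P ^ k) i l * P l a)
          (fun l _ => mul_nonneg (hPpow k i l) (hnonneg l a)) (mem_univ a)
  -- sums over the subtype
  have hsubt : ∀ (f : Fin n → ℝ),
      ∑ j : {x : Fin n // P x x ≠ 1}, f j.val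
        = ∑ j ∈ Finset.univ.filter (fun x => P x x ≠ 1), f j := by
    intro f
    exact (Finset.sum_subtype (p := fun x => P x x ≠ 1)
      (s := Finset.univ.filter (fun x => P x x ≠ 1)) (by simp) f).symm
  -- Q^k entries dominated by P^k entries
  have hQle : ∀ k (i j : {x : Fin n // P x x ≠ 1}),
      (Q ^ k) i j ≤ (P ^ k) i.val j.val := by
    intro k
    induction k with
    | zero =>
      intro i j
      simp only [pow_zero, Matrix.one_apply, Subtype.ext_iff]
      split <;> norm_num
    | succ k ih =>
      intro i j
      rw [pow_succ, pow_succ, Matrix.mul_apply, Matrix.mul_apply]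
      have h1 : ∑ l : {x : Fin n // P x x ≠ 1}, (Q ^ k) i l * Q l j
          ≤ ∑ l : {x : Fin n // P x x ≠ 1}, (P ^ k) i.val l.val * P l.val j.val := by
        apply Finset.sum_le_sum
        intro l _
        have : Q l j = P l.val j.val := rfl
        rw [this]
        exact mul_le_mul_of_nonneg_right (ih i l) (hnonneg l.val j.val)
      refine h1.trans ?_
      rw [hsubt (fun l => (P ^ k) i.val l * P l j.val)]
      apply Finset.sum_le_sum_of_subset_of_nonneg (Finset.filter_subset _ _)
      intro l _ _
      exact mul_nonneg (hPpow k i.val l) (hnonneg l j.val)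
  -- choose reach data
  choose k a ha hk using hreach
  set m : ℕ := Finset.univ.sup k + 1 with hm
  have hm1 : 1 ≤ m := Nat.succ_le_succ (Nat.zero_le _)
  -- row sums of Q^m are < 1
  have hlt : ∀ i : {x : Fin n // P x x ≠ 1},
      ∑ j : {x : Fin n // P x x ≠ 1}, (Q ^ m) i j < 1 := by
    intro i
    have hkm : k i.val ≤ m := le_trans (Finset.le_sup (mem_univ i.val)) (Nat.le_succ _)
    have hpos : 0 < (P ^ m) i.val (a i.val) :=
      lt_of_lt_of_le (hk i.val) (hmono (a i.val) (ha i.val) i.val hkm)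
    have hle1 : ∑ j : {x : Fin n // P x x ≠ 1}, (Q ^ m) i j
        ≤ ∑ j ∈ Finset.univ.filter (fun x => P x x ≠ 1), (P ^ m) i.val j := by
      rw [← hsubt (fun l => (P ^ m) i.val l)]
      exact Finset.sum_le_sum fun j _ => hQle m i j
    have hsub : Finset.univ.filter (fun x => P x x ≠ 1)
        ⊆ Finset.univ \ {a i.val} := by
      intro x hx
      simp only [Finset.mem_filter] at hx
      simp only [Finset.mem_sdiff, Finset.mem_univ, Finset.mem_singleton, true_and]
      intro hxa
      exact hx.2 (hxa ▸ ha i.val)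
    have hle2 : ∑ j ∈ Finset.univ.filter (fun x => P x x ≠ 1), (P ^ m) i.val j
        ≤ ∑ j ∈ Finset.univ \ {a i.val}, (P ^ m) i.val j :=
      Finset.sum_le_sum_of_subset_of_nonneg hsub
        (fun l _ _ => hPpow m i.val l)
    have heq : ∑ j ∈ Finset.univ \ {a i.val}, (P ^ m) i.val j
        = 1 - (P ^ m) i.val (a i.val) := by
      rw [Finset.sum_sdiff_eq_sub (by simp), hrowpow m i.val]
      simp
    calc ∑ j : {x : Fin n // P x x ≠ 1}, (Q ^ m) i j
        ≤ ∑ j ∈ Finset.univ \ {a i.val}, (P ^ m) i.val j := hle1.trans hle2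
      _ = 1 - (P ^ m) i.val (a i.val) := heq
      _ < 1 := by linarith
  by_cases hT : Nonempty {x : Fin n // P x x ≠ 1}
  · obtain ⟨i0, hi0⟩ := Finite.exists_max
      (fun i : {x : Fin n // P x x ≠ 1} => ∑ j, (Q ^ m) i j)
    exact ⟨m, _, hm1, hlt i0, fun i => hi0 i⟩
  · exact ⟨m, 0, hm1, by norm_num, fun i => absurd ⟨i⟩ hT⟩
end

section
/- Let P be an n×n row-stochastic real matrix with absorbing states A = {a | P a a = 1}, and assume every state can reach some absorbing state (for every i there are k ≥ 0 and a ∈ A with (P^k)_{ia} > 0). Let T = Aᶜ and let Q be the T×T submatrix of P. Then the matrix powers of Q converge entrywise to the zero matrix: for all i, j ∈ T, (Q^k)_{ij} → 0 as k → ∞. -/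
open Finset Filter

attribute [local instance] Classical.propDecidable

/-- For an absorbing Markov chain `P` on `Fin n` (row-stochastic,
and from every state some absorbing state `a`, i.e. one with `P a a = 1`, is
reachable), the powers of the transient block `Q` (the submatrix of `P` on the
complement of the absorbing states) converge entrywise to `0`. -/
theorem transient_block_pow_tendsto_zero
    (n : ℕ) (P : Matrix (Fin n) (Fin n) ℝ)
    (hnonneg : ∀ i j, 0 ≤ P i j)
    (hrow : ∀ i, ∑ j, P i j = 1)
    (hreach : ∀ i : Fin n, ∃ (k : ℕ) (a : Fin n), P a a = 1 ∧ 0 < (P ^ k) i a) :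
    ∀ i j : {x : Fin n // P x x ≠ 1},
      Tendsto
        (fun k : ℕ =>
          ((P.submatrix (Subtype.val : {x : Fin n // P x x ≠ 1} → Fin n)
              Subtype.val) ^ k) i j)
        atTop (nhds 0) := by
  classical
  set T := {x : Fin n // P x x ≠ 1} with hT
  set Q : Matrix T T ℝ := P.submatrix Subtype.val Subtype.val with hQdef
  -- powers of P are nonneg
  have hPpow_nonneg : ∀ k i j, 0 ≤ (P ^ k) i j := by
    intro k
    induction k with
    | zero => intro i j; simp [Matrix.one_apply]; split <;> norm_num
    | succ k ih =>
      intro i j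
      rw [pow_succ, Matrix.mul_apply]
      exact Finset.sum_nonneg fun l _ => mul_nonneg (ih i l) (hnonneg l j)
  have hPpow_row : ∀ k i, ∑ j, (P ^ k) i j = 1 := by
    intro k
    induction k with
    | zero => intro i; simp [Matrix.one_apply]
    | succ k ih =>
      intro i
      simp only [pow_succ, Matrix.mul_apply]
      rw [Finset.sum_comm]
      calc ∑ l, ∑ j, (P ^ k) i l * P l j
          = ∑ l, (P ^ k) i l * ∑ j, P l j := by
            simp [Finset.mul_sum]
        _ = 1 := by simp [hrow, ih]
  have hQpow_nonneg : ∀ k (i j : T), 0 ≤ (Q ^ k) i j := by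
    intro k
    induction k with
    | zero => intro i j; simp [Matrix.one_apply]; split <;> norm_num
    | succ k ih =>
      intro i j
      rw [pow_succ, Matrix.mul_apply]
      exact Finset.sum_nonneg fun l _ => mul_nonneg (ih i l) (hnonneg _ _)
  -- Q^k ≤ P^k entrywise
  have hsub : ∀ (g : Fin n → ℝ), (∀ x, 0 ≤ g x) →
      ∑ l : T, g l.val ≤ ∑ l, g l := by
    intro g hg
    rw [← Finset.sum_subtype (s := Finset.univ.filter (fun x => P x x ≠ 1))
      (by simp) g]
    exact Finset.sum_le_sum_of_subset_of_nonneg (Finset.filter_subset _ _)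
      (fun x _ _ => hg x)
  have hle : ∀ k (i j : T), (Q ^ k) i j ≤ (P ^ k) i.val j.val := by
    intro k
    induction k with
    | zero =>
      intro i j
      simp only [pow_zero, Matrix.one_apply]
      split <;> [simp_all [Subtype.ext_iff]; split <;> norm_num]
    | succ k ih =>
      intro i j
      rw [pow_succ, pow_succ, Matrix.mul_apply, Matrix.mul_apply]
      calc ∑ l : T, (Q ^ k) i l * Q l j
          ≤ ∑ l : T, (P ^ k) i.val l.val * P l.val j.val :=
            Finset.sum_le_sum fun l _ =>
              mul_le_mul_of_nonneg_right (ih i l) (hnonneg _ _)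
        _ ≤ ∑ l, (P ^ k) i.val l * P l j.val :=
            hsub (fun x => (P ^ k) i.val x * P x j.val)
              (fun x => mul_nonneg (hPpow_nonneg _ _ _) (hnonneg _ _))
  -- row sums of Q^k
  set r : ℕ → T → ℝ := fun k i => ∑ j, (Q ^ k) i j with hr
  have hr_nonneg : ∀ k i, 0 ≤ r k i :=
    fun k i => Finset.sum_nonneg fun j _ => hQpow_nonneg k i j
  have hr_le_one : ∀ k i, r k i ≤ 1 := by
    intro k i
    calc r k i ≤ ∑ j : T, (P ^ k) i.val j.val :=
          Finset.sum_le_sum fun j _ => hle k i j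
      _ ≤ ∑ j, (P ^ k) i.val j := hsub _ (fun x => hPpow_nonneg _ _ _)
      _ = 1 := hPpow_row k i.val
  have hstep : ∀ (k l : ℕ) (c : ℝ) (i : T), (∀ j, r l j ≤ c) →
      r (k + l) i ≤ r k i * c := by
    intro k l c i hc
    have : r (k + l) i = ∑ t : T, (Q ^ k) i t * r l t := by
      simp only [hr, pow_add, Matrix.mul_apply]
      rw [Finset.sum_comm]
      simp [Finset.mul_sum]
    rw [this]
    calc ∑ t : T, (Q ^ k) i t * r l t
        ≤ ∑ t : T, (Q ^ k) i t * c :=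
          Finset.sum_le_sum fun t _ =>
            mul_le_mul_of_nonneg_left (hc t) (hQpow_nonneg _ _ _)
      _ = r k i * c := by rw [← Finset.sum_mul]
  have hr_anti : ∀ (k l : ℕ) (i : T), k ≤ l → r l i ≤ r k i := by
    intro k l i hkl
    obtain ⟨d, rfl⟩ := Nat.exists_eq_add_of_le hkl
    have := hstep k d 1 i (fun j => hr_le_one d j)
    simpa using this
  -- for each i there is k with r k i < 1
  have hlt : ∀ i : T, ∃ k, r k i < 1 := by
    intro i
    obtain ⟨k, a, haa, hpos⟩ := hreach i.val
    have haT : ∀ j : T, j.val ≠ a := by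
      intro j hj
      exact j.2 (hj ▸ haa)
    refine ⟨k, ?_⟩
    have h1 : r k i ≤ ∑ j : T, (P ^ k) i.val j.val :=
      Finset.sum_le_sum fun j _ => hle k i j
    have h2 : ∑ j : T, (P ^ k) i.val j.val ≤ ∑ j ∈ Finset.univ.erase a, (P ^ k) i.val j := by
      rw [← Finset.sum_subtype (s := Finset.univ.filter (fun x => P x x ≠ 1))
        (by simp) (fun j => (P ^ k) i.val j)]
      refine Finset.sum_le_sum_of_subset_of_nonneg ?_ (fun x _ _ => hPpow_nonneg _ _ _)
      intro x hx
      simp only [Finset.mem_filter, Finset.mem_univ, true_and] at hx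
      simp only [Finset.mem_erase, Finset.mem_univ, and_true]
      intro hxa; exact hx (hxa ▸ haa)
    have h3 : ∑ j ∈ Finset.univ.erase a, (P ^ k) i.val j = 1 - (P ^ k) i.val a := by
      have := hPpow_row k i.val
      rw [← Finset.add_sum_erase _ _ (Finset.mem_univ a)] at this
      linarith
    calc r k i ≤ _ := h1
      _ ≤ _ := h2
      _ = 1 - (P ^ k) i.val a := h3
      _ < 1 := by linarith
  -- main
  intro i j
  have hTne : Nonempty T := ⟨i⟩
  choose f hf using hlt
  set m : ℕ := (Finset.univ.sup f) + 1 with hm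
  have hm_pos : 0 < m := Nat.succ_pos _
  have hfm : ∀ t : T, f t ≤ m :=
    fun t => le_trans (Finset.le_sup (Finset.mem_univ t)) (Nat.le_succ _)
  set c : ℝ := Finset.univ.sup' (Finset.univ_nonempty) (r m) with hc
  have hc_lt : c < 1 := by
    rw [hc, Finset.sup'_lt_iff]
    intro t _
    exact lt_of_le_of_lt (hr_anti (f t) m t (hfm t)) (hf t)
  have hc_nonneg : 0 ≤ c :=
    le_trans (hr_nonneg m i) (Finset.le_sup' _ (Finset.mem_univ i))
  have hc_bound : ∀ t : T, r m t ≤ c :=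
    fun t => Finset.le_sup' _ (Finset.mem_univ t)
  have hgeo : ∀ s (t : T), r (m * s) t ≤ c ^ s := by
    intro s
    induction s with
    | zero => intro t; simpa using hr_le_one 0 t
    | succ s ih =>
      intro t
      have h1 : r (m * s + m) t ≤ r (m * s) t * c := hstep (m * s) m c t hc_bound
      have : r (m * s) t * c ≤ c ^ s * c :=
        mul_le_mul_of_nonneg_right (ih t) hc_nonneg
      calc r (m * (s + 1)) t = r (m * s + m) t := by ring_nf
        _ ≤ c ^ s * c := le_trans h1 this
        _ = c ^ (s + 1) := by ring
  have hbound : ∀ k, (Q ^ k) i j ≤ c ^ (k / m) := by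
    intro k
    have h1 : (Q ^ k) i j ≤ r k i :=
      Finset.single_le_sum (fun t _ => hQpow_nonneg k i t) (Finset.mem_univ j)
    have h2 : r k i ≤ r (m * (k / m)) i :=
      hr_anti (m * (k / m)) k i (Nat.mul_div_le k m)
    exact le_trans h1 (le_trans h2 (hgeo (k / m) i))
  refine squeeze_zero (fun k => hQpow_nonneg k i j) hbound ?_
  have hdiv : Tendsto (fun k : ℕ => k / m) atTop atTop := by
    apply tendsto_atTop_atTop.2
    intro b
    exact ⟨b * m, fun a ha => (Nat.le_div_iff_mul_le hm_pos).2 ha⟩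
  exact (tendsto_pow_atTop_nhds_zero_of_lt_one hc_nonneg hc_lt).comp hdiv
end

section
/- Let P be an n×n row-stochastic real matrix with absorbing states A = {a | P a a = 1}, and assume every state can reach some absorbing state (for every i there are k ≥ 0 and a ∈ A with (P^k)_{ia} > 0). Then for every state i, the probability of having been absorbed by step k tends to 1: ∑_{a ∈ A} (P^k)_{ia} → 1 as k → ∞. Equivalently, for every i and every transient state j ∉ A, (P^k)_{ij} → 0. -/
open Finset Filter

attribute [local instance] Classical.propDecidable

namespace AbsorbAux

variable {n : ℕ} {P : Matrix (Fin n) (Fin n) ℝ}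

lemma pow_nn (hnonneg : ∀ i j, 0 ≤ P i j) : ∀ k i j, 0 ≤ (P ^ k) i j := by
  intro k
  induction k with
  | zero => intro i j; rw [pow_zero, Matrix.one_apply]; split <;> norm_num
  | succ k ih =>
      intro i j
      rw [pow_succ, Matrix.mul_apply]
      exact Finset.sum_nonneg fun l _ => mul_nonneg (ih i l) (hnonneg l j)

lemma pow_row (hrow : ∀ i, ∑ j, P i j = 1) : ∀ k i, ∑ j, (P ^ k) i j = 1 := by
  intro k
  induction k with
  | zero => intro i; simp [Matrix.one_apply]
  | succ k ih =>
      intro i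
      simp only [pow_succ, Matrix.mul_apply]
      rw [Finset.sum_comm]
      simp_rw [← Finset.mul_sum, hrow, mul_one]
      exact ih i

lemma abs_row (hnonneg : ∀ i j, 0 ≤ P i j) (hrow : ∀ i, ∑ j, P i j = 1)
    {a : Fin n} (ha : P a a = 1) {j : Fin n} (hj : j ≠ a) : P a j = 0 := by
  have h1 : ∑ l ∈ Finset.univ.erase a, P a l = 0 := by
    have := Finset.add_sum_erase Finset.univ (fun l => P a l) (Finset.mem_univ a)
    simp only [ha] at this
    rw [hrow a] at this
    linarith
  have := (Finset.sum_eq_zero_iff_of_nonneg (fun l _ => hnonneg a l)).mp h1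
  exact this j (Finset.mem_erase.mpr ⟨hj, Finset.mem_univ j⟩)

lemma abs_pow_row (hnonneg : ∀ i j, 0 ≤ P i j) (hrow : ∀ i, ∑ j, P i j = 1)
    {a : Fin n} (ha : P a a = 1) : ∀ k j, (P ^ k) a j = (1 : Matrix (Fin n) (Fin n) ℝ) a j := by
  intro k
  induction k with
  | zero => intro j; rw [pow_zero]
  | succ k ih =>
      intro j
      rw [pow_succ', Matrix.mul_apply]
      rw [Finset.sum_eq_single a]
      · rw [ha, one_mul, ih]
      · intro l _ hl
        rw [abs_row hnonneg hrow ha hl, zero_mul]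
      · intro h; exact absurd (Finset.mem_univ a) h


lemma g_step (hnonneg : ∀ i j, 0 ≤ P i j)
    {a : Fin n} (ha : P a a = 1) (i : Fin n) (k : ℕ) :
    (P ^ k) i a ≤ (P ^ (k + 1)) i a := by
  rw [pow_succ, Matrix.mul_apply]
  have := Finset.single_le_sum (f := fun l => (P ^ k) i l * P l a)
    (fun l _ => mul_nonneg (pow_nn hnonneg k i l) (hnonneg l a)) (Finset.mem_univ a)
  simp only [ha, mul_one] at this
  exact this

lemma decomp (a b : ℕ) (i : Fin n) (T : Finset (Fin n)) :
    ∑ j ∈ T, (P ^ (a + b)) i j = ∑ l, (P ^ a) i l * ∑ j ∈ T, (P ^ b) l j := by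
  simp_rw [pow_add, Matrix.mul_apply, Finset.mul_sum]
  rw [Finset.sum_comm]

end AbsorbAux


/-- In an absorbing Markov chain `P` on `Fin n` (row-stochastic,
and from every state some absorbing state `a`, i.e. one with `P a a = 1`, is
reachable), absorption occurs with probability one: for every starting state `i`
the probability `∑_{a ∈ A} (P ^ k)_{i a}` of having been absorbed by step `k`
tends to `1`, and for every transient state `j` (one with `P j j ≠ 1`) the
probability `(P ^ k)_{i j}` tends to `0`. -/
theorem absorbed_with_probability_one
    (n : ℕ) (P : Matrix (Fin n) (Fin n) ℝ)
    (hnonneg : ∀ i j, 0 ≤ P i j)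
    (hrow : ∀ i, ∑ j, P i j = 1)
    (hreach : ∀ i : Fin n, ∃ (k : ℕ) (a : Fin n), P a a = 1 ∧ 0 < (P ^ k) i a) :
    (∀ i : Fin n,
      Tendsto (fun k : ℕ => ∑ a ∈ Finset.univ.filter (fun a => P a a = 1), (P ^ k) i a)
        atTop (nhds 1)) ∧
    (∀ i j : Fin n, P j j ≠ 1 →
      Tendsto (fun k : ℕ => (P ^ k) i j) atTop (nhds 0)) := by
  rcases Nat.eq_zero_or_pos n with hn | hn
  · subst hn
    exact ⟨fun i => i.elim0, fun i => i.elim0⟩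
  haveI : Nonempty (Fin n) := Fin.pos_iff_nonempty.mp hn
  set A : Finset (Fin n) := Finset.univ.filter (fun a => P a a = 1) with hA
  set T : Finset (Fin n) := Finset.univ.filter (fun a => ¬ P a a = 1) with hT
  set f : ℕ → Fin n → ℝ := fun k i => ∑ j ∈ T, (P ^ k) i j with hf
  set g : ℕ → Fin n → ℝ := fun k i => ∑ a ∈ A, (P ^ k) i a with hg
  have hpnn := AbsorbAux.pow_nn hnonneg
  have hprow := AbsorbAux.pow_row hrow
  have hfg : ∀ k i, g k i + f k i = 1 := by
    intro k i
    rw [hf, hg]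
    rw [Finset.sum_filter_add_sum_filter_not Finset.univ (fun a => P a a = 1) ((P ^ k) i ·)]
    exact hprow k i
  have hfnn : ∀ k i, 0 ≤ f k i := fun k i => Finset.sum_nonneg fun j _ => hpnn k i j
  -- f vanishes on absorbing states
  have hfA : ∀ k a, a ∈ A → f k a = 0 := by
    intro k a haA
    rw [hA, Finset.mem_filter] at haA
    refine Finset.sum_eq_zero fun j hj => ?_
    rw [hT, Finset.mem_filter] at hj
    rw [AbsorbAux.abs_pow_row hnonneg hrow haA.2, Matrix.one_apply]
    have hne : a ≠ j := fun h => hj.2 (h ▸ haA.2)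
    simp [hne]
  -- g is monotone in k
  have hgmono : ∀ i, Monotone (fun k => g k i) := by
    intro i
    apply monotone_nat_of_le_succ
    intro k
    refine Finset.sum_le_sum fun a haA => ?_
    rw [hA, Finset.mem_filter] at haA
    exact AbsorbAux.g_step hnonneg haA.2 i k
  have hfanti : ∀ i, Antitone (fun k => f k i) := by
    intro i k l hkl
    have h1 := hfg k i
    have h2 := hfg l i
    have := hgmono i hkl
    simp only at this ⊢
    linarith
  -- pick a uniform time m with f m i < 1 for all i
  obtain ⟨K, hK⟩ : ∃ K : Fin n → ℕ, ∀ i, 0 < g (K i) i := by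
    refine ⟨fun i => (hreach i).choose, fun i => ?_⟩
    obtain ⟨a, ha, hpos⟩ := (hreach i).choose_spec
    have haA : a ∈ A := by rw [hA, Finset.mem_filter]; exact ⟨Finset.mem_univ a, ha⟩
    calc 0 < (P ^ (hreach i).choose) i a := hpos
      _ ≤ _ := Finset.single_le_sum (fun b _ => hpnn _ i b) haA
  set m : ℕ := (Finset.univ.sup K) + 1 with hm
  have hm0 : 0 < m := Nat.succ_pos _
  have hfm : ∀ i, f m i < 1 := by
    intro i
    have h1 : g (K i) i ≤ g m i :=
      hgmono i (le_trans (Finset.le_sup (Finset.mem_univ i)) (Nat.le_succ _))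
    have := hfg m i
    have := hK i
    linarith
  set c : ℝ := Finset.univ.sup' Finset.univ_nonempty (fun i => f m i) with hc
  have hcf : ∀ i, f m i ≤ c := fun i => Finset.le_sup' _ (Finset.mem_univ i)
  have hc1 : c < 1 := by
    rw [hc, Finset.sup'_lt_iff]
    exact fun i _ => hfm i
  have hc0 : 0 ≤ c := le_trans (hfnn m (Classical.arbitrary (Fin n))) (hcf _)
  -- decomposition: f (a + b) i = ∑ l, (P^a) i l * f b l
  have hdec : ∀ a b i, f (a + b) i = ∑ l, (P ^ a) i l * f b l := by
    intro a b i
    exact AbsorbAux.decomp a b i T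
  -- geometric decay
  have hgeo : ∀ t i, f (t * m) i ≤ c ^ t := by
    intro t
    induction t with
    | zero =>
        intro i
        simp only [zero_mul, pow_zero]
        calc f 0 i ≤ ∑ j, (P ^ 0) i j :=
              Finset.sum_le_sum_of_subset_of_nonneg (Finset.filter_subset _ _)
                (fun j _ _ => hpnn 0 i j)
          _ = 1 := hprow 0 i
    | succ t ih =>
        intro i
        have : (t + 1) * m = t * m + m := by ring
        rw [this, hdec]
        have hsplit : ∑ l, (P ^ (t * m)) i l * f m l
            = ∑ l ∈ T, (P ^ (t * m)) i l * f m l := by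
          rw [← Finset.sum_filter_add_sum_filter_not Finset.univ (fun a => ¬ P a a = 1)
            (fun l => (P ^ (t * m)) i l * f m l)]
          have : ∑ l ∈ Finset.univ.filter (fun a => ¬¬ P a a = 1),
              (P ^ (t * m)) i l * f m l = 0 := by
            refine Finset.sum_eq_zero fun l hl => ?_
            rw [Finset.mem_filter] at hl
            have hlA : l ∈ A := by
              rw [hA, Finset.mem_filter]
              exact ⟨Finset.mem_univ l, not_not.mp hl.2⟩
            rw [hfA m l hlA, mul_zero]
          rw [this, add_zero]
        rw [hsplit]
        calc ∑ l ∈ T, (P ^ (t * m)) i l * f m l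
            ≤ ∑ l ∈ T, (P ^ (t * m)) i l * c :=
              Finset.sum_le_sum fun l _ =>
                mul_le_mul_of_nonneg_left (hcf l) (hpnn _ i l)
          _ = c * f (t * m) i := by rw [← Finset.sum_mul]; ring
          _ ≤ c * c ^ t := mul_le_mul_of_nonneg_left (ih i) hc0
          _ = c ^ (t + 1) := by ring
  -- f tends to 0
  have hft0 : ∀ i, Tendsto (fun k => f k i) atTop (nhds 0) := by
    intro i
    rw [Metric.tendsto_atTop]
    intro ε hε
    have hct : Tendsto (fun t : ℕ => c ^ t) atTop (nhds 0) :=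
      tendsto_pow_atTop_nhds_zero_of_lt_one hc0 hc1
    rw [Metric.tendsto_atTop] at hct
    obtain ⟨t, ht⟩ := hct ε hε
    refine ⟨t * m, fun k hk => ?_⟩
    have h1 : f k i ≤ c ^ t := le_trans (hfanti i hk) (hgeo t i)
    have h2 := ht t le_rfl
    rw [Real.dist_eq, sub_zero] at h2 ⊢
    rw [abs_of_nonneg (hfnn k i)]
    calc f k i ≤ c ^ t := h1
      _ ≤ |c ^ t| := le_abs_self _
      _ < ε := h2
  constructor
  · intro i
    have : (fun k : ℕ => ∑ a ∈ Finset.univ.filter (fun a => P a a = 1), (P ^ k) i a)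
        = fun k => 1 - f k i := by
      funext k
      have := hfg k i
      rw [hg] at this
      linarith
    rw [this]
    have := (hft0 i).const_sub 1
    simpa using this
  · intro i j hj
    have hjT : j ∈ T := by rw [hT, Finset.mem_filter]; exact ⟨Finset.mem_univ j, hj⟩
    refine tendsto_of_tendsto_of_tendsto_of_le_of_le tendsto_const_nhds (hft0 i)
      (fun k => hpnn k i j) (fun k => ?_)
    exact Finset.single_le_sum (fun b _ => hpnn k i b) hjT
end

section
/- Let P be an n×n row-stochastic real matrix with absorbing states A = {a | P a a = 1}, and assume every state can reach some absorbing state. Let κ be the Markov kernel on Fin n given by κ(i) = the probability measure with mass P_{ij} at j, and for a starting state x let μ_x be the law of the trajectory (X_0, X_1, X_2, …) of the time-homogeneous Markov chain with transition kernel κ started at X_0 = x (the Ionescu–Tulcea measure on (Fin n)^ℕ). Then for every starting state x, μ_x–almost every trajectory enters A: the set of sequences ω ∈ (Fin n)^ℕ such that ω(k) ∉ A for all k has μ_x-measure zero. -/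
/-!
Kill the chain on entering the absorbing set `A`: the resulting substochastic taboo matrix `Q`
bounds the probability of avoiding `A` up to time `k` by the row sum of `Q ^ k` at the start.
From every state some absorbing state is reached with positive probability, so each row of some
power of `Q` sums to less than one. Taking `M` beyond all these times, the row sums of `Q ^ M` are
at most some `c < 1`, those of `Q ^ (M * r)` at most `c ^ r`, and they decrease to `0`.
-/

open Finset MeasureTheory Filter Topology

namespace Matrix

variable {ι R : Type*}

def pathWeight [CommMonoid R] (A : Matrix ι ι R) {k : ℕ} (g : Fin (k + 1) → ι) : R :=
  ∏ j : Fin k, A (g j.castSucc) (g j.succ)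

lemma pathWeight_cons [CommMonoid R] (A : Matrix ι ι R) (i : ι) {k : ℕ} (g : Fin (k + 1) → ι) :
    pathWeight A (Fin.cons i g) = A i (g 0) * pathWeight A g := by
  simp [pathWeight, Fin.prod_univ_succ]

/-- `(tabooMatrix P S ^ k) i j` is the probability of going from `i` to `j` in `k` steps without
visiting `S` at times `1, …, k`. -/
noncomputable def tabooMatrix (P : Matrix ι ι ℝ) (S : Set ι) : Matrix ι ι ℝ :=
  of fun i j => Sᶜ.indicator (P i) j

section Taboo

variable {P : Matrix ι ι ℝ} {S : Set ι}

lemma tabooMatrix_apply_of_mem (i : ι) {j : ι} (hj : j ∈ S) : tabooMatrix P S i j = 0 :=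
  Set.indicator_of_notMem (Set.notMem_compl_iff.2 hj) _

lemma tabooMatrix_apply_of_notMem (i : ι) {j : ι} (hj : j ∉ S) : tabooMatrix P S i j = P i j :=
  Set.indicator_of_mem (Set.mem_compl hj) _

lemma tabooMatrix_apply_nonneg (hP : ∀ i j, 0 ≤ P i j) (i j : ι) : 0 ≤ tabooMatrix P S i j :=
  Set.indicator_nonneg (fun j _ => hP i j) j

lemma tabooMatrix_apply_le (hP : ∀ i j, 0 ≤ P i j) (i j : ι) : tabooMatrix P S i j ≤ P i j :=
  Set.indicator_le_self' (fun j _ => hP i j) j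

lemma pathWeight_tabooMatrix {k : ℕ} {g : Fin (k + 1) → ι} (hg : ∀ j, g j ∉ S) :
    pathWeight (tabooMatrix P S) g = pathWeight P g :=
  prod_congr rfl fun j _ => tabooMatrix_apply_of_notMem _ (hg j.succ)

end Taboo

variable [Fintype ι]

section OrderedSemiring

variable [Semiring R] [PartialOrder R] [IsOrderedRing R]

lemma mulVec_mono {A : Matrix ι ι R} (hA : ∀ i j, 0 ≤ A i j) {v w : ι → R} (hvw : v ≤ w) :
    A *ᵥ v ≤ A *ᵥ w :=
  fun i => sum_le_sum fun j _ => mul_le_mul_of_nonneg_left (hvw j) (hA i j)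

variable [DecidableEq ι]

lemma pow_apply_le_pow_apply {A B : Matrix ι ι R} (hA : ∀ i j, 0 ≤ A i j)
    (hAB : ∀ i j, A i j ≤ B i j) (k : ℕ) (i j : ι) : (A ^ k) i j ≤ (B ^ k) i j := by
  induction k generalizing j with
  | zero => rfl
  | succ k ih =>
    rw [pow_succ, pow_succ, mul_apply, mul_apply]
    exact sum_le_sum fun l _ => mul_le_mul (ih l) (hAB l j) (hA l j)
      (pow_apply_nonneg (fun i j => (hA i j).trans (hAB i j)) k i l)

lemma pow_apply_le_pow_succ_apply {A : Matrix ι ι R} (hA : ∀ i j, 0 ≤ A i j) {a : ι}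
    (ha : A a a = 1) (k : ℕ) (i : ι) : (A ^ k) i a ≤ (A ^ (k + 1)) i a := by
  rw [pow_succ, mul_apply]
  calc (A ^ k) i a = (A ^ k) i a * A a a := by rw [ha, mul_one]
    _ ≤ ∑ l, (A ^ k) i l * A l a :=
      single_le_sum (fun l _ => mul_nonneg (pow_apply_nonneg hA k i l) (hA l a)) (mem_univ a)

lemma pow_mulVec_one_nonneg {A : Matrix ι ι R} (hA : ∀ i j, 0 ≤ A i j) (k : ℕ) :
    0 ≤ A ^ k *ᵥ 1 := by
  simpa using mulVec_mono (pow_apply_nonneg hA k) zero_le_one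

lemma antitone_pow_mulVec_one {A : Matrix ι ι R} (hA : ∀ i j, 0 ≤ A i j) (hsub : A *ᵥ 1 ≤ 1) :
    Antitone fun k => A ^ k *ᵥ 1 :=
  antitone_nat_of_succ_le fun k => by
    simpa only [pow_succ, ← mulVec_mulVec] using mulVec_mono (pow_apply_nonneg hA k) hsub

end OrderedSemiring

variable [DecidableEq ι]

theorem sum_mul_pathWeight [CommSemiring R] (A : Matrix ι ι R) (k : ℕ) (v : ι → R) :
    ∑ g : Fin (k + 1) → ι, v (g 0) * pathWeight A g = v ⬝ᵥ (A ^ k *ᵥ 1) := by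
  induction k generalizing v with
  | zero =>
    simpa [pathWeight, dotProduct] using (Equiv.funUnique (Fin 1) ι).sum_comp v
  | succ k ih =>
    rw [← (Fin.consEquiv fun _ => ι).sum_comp, Fintype.sum_prod_type, pow_succ', ← mulVec_mulVec,
      dotProduct_mulVec, ← ih, Finset.sum_comm]
    refine sum_congr rfl fun g _ => ?_
    simp only [vecMul, dotProduct, sum_mul, mul_assoc]
    exact sum_congr rfl fun i _ => congrArg (v i * ·) (pathWeight_cons A i g)

lemma pow_mulVec_one_le_pow_smul [CommSemiring R] [PartialOrder R] [IsOrderedRing R]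
    {A : Matrix ι ι R} (hA : ∀ i j, 0 ≤ A i j) {c : R} (hc : 0 ≤ c) (h : A *ᵥ 1 ≤ c • 1)
    (r : ℕ) : A ^ r *ᵥ 1 ≤ c ^ r • 1 := by
  induction r with
  | zero => simp
  | succ r ih =>
    calc A ^ (r + 1) *ᵥ 1 = A ^ r *ᵥ (A *ᵥ 1) := by rw [pow_succ, mulVec_mulVec]
      _ ≤ A ^ r *ᵥ (c • 1) := mulVec_mono (pow_apply_nonneg hA r) h
      _ = c • (A ^ r *ᵥ 1) := mulVec_smul _ _ _
      _ ≤ c • (c ^ r • 1) := smul_le_smul_of_nonneg_left ih hc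
      _ = c ^ (r + 1) • 1 := by rw [smul_smul, pow_succ']

theorem tendsto_pow_mulVec_one_apply_zero {A : Matrix ι ι ℝ} (hA : ∀ i j, 0 ≤ A i j)
    (hsub : A *ᵥ 1 ≤ 1) (hleak : ∀ i, ∃ m, (A ^ m *ᵥ 1) i < 1) (i : ι) :
    Tendsto (fun k => (A ^ k *ᵥ 1) i) atTop (𝓝 0) := by
  choose m hm using hleak
  set M := univ.sup m
  have hanti := antitone_pow_mulVec_one hA hsub
  have hM : M ≠ 0 := fun h0 => by
    have : m i = 0 := Nat.eq_zero_of_le_zero (h0 ▸ le_sup (mem_univ i))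
    simpa [this] using hm i
  set c := ‖A ^ M *ᵥ 1‖
  have hc : c < 1 := by
    refine (pi_norm_lt_iff one_pos).2 fun j => ?_
    rw [Real.norm_of_nonneg (pow_mulVec_one_nonneg hA M j)]
    exact (hanti (le_sup (mem_univ j)) j).trans_lt (hm j)
  have hAM : A ^ M *ᵥ 1 ≤ c • 1 := fun j => by
    simpa using (le_abs_self _).trans (norm_le_pi_norm (A ^ M *ᵥ 1) j)
  have hbound : ∀ k, (A ^ k *ᵥ 1) i ≤ c ^ (k / M) := fun k => by
    calc (A ^ k *ᵥ 1) i ≤ ((A ^ M) ^ (k / M) *ᵥ 1) i := by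
          rw [← pow_mul]; exact hanti (Nat.mul_div_le k M) i
      _ ≤ c ^ (k / M) := by
          simpa using pow_mulVec_one_le_pow_smul (pow_apply_nonneg hA M) (norm_nonneg _) hAM
            (k / M) i
  exact tendsto_of_tendsto_of_tendsto_of_le_of_le tendsto_const_nhds
    ((tendsto_pow_atTop_nhds_zero_of_lt_one (norm_nonneg _) hc).comp
      (Nat.tendsto_div_const_atTop hM))
    (fun k => pow_mulVec_one_nonneg hA k i) hbound

section Taboo

variable {P : Matrix ι ι ℝ} {S : Set ι}

lemma tabooMatrix_mulVec_one_le (hP : P ∈ rowStochastic ℝ ι) : tabooMatrix P S *ᵥ 1 ≤ 1 :=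
  fun i => by
    have hP0 : ∀ i j, 0 ≤ P i j := fun _ _ => nonneg_of_mem_rowStochastic hP
    simpa [mulVec, dotProduct] using
      (sum_le_sum fun j _ => tabooMatrix_apply_le (S := S) hP0 i j).trans_eq
        (sum_row_of_mem_rowStochastic hP i)

/-- Mass that reaches `a ∈ S` at time `k + 1` is missing from the taboo row sum. -/
lemma tabooMatrix_pow_succ_mulVec_one_lt (hP : P ∈ rowStochastic ℝ ι) {a i : ι} (ha : a ∈ S)
    {k : ℕ} (hpos : 0 < (P ^ (k + 1)) i a) : (tabooMatrix P S ^ (k + 1) *ᵥ 1) i < 1 := by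
  have hP0 : ∀ i j, 0 ≤ P i j := fun _ _ => nonneg_of_mem_rowStochastic hP
  have hcol : (tabooMatrix P S ^ (k + 1)) i a = 0 := by
    rw [pow_succ, mul_apply]
    exact sum_eq_zero fun l _ => by rw [tabooMatrix_apply_of_mem l ha, mul_zero]
  calc (tabooMatrix P S ^ (k + 1) *ᵥ 1) i
      = ∑ j ∈ univ.erase a, (tabooMatrix P S ^ (k + 1)) i j := by
        simp [mulVec, dotProduct, sum_erase _ hcol]
    _ ≤ ∑ j ∈ univ.erase a, (P ^ (k + 1)) i j :=
        sum_le_sum fun j _ => pow_apply_le_pow_apply (tabooMatrix_apply_nonneg hP0)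
          (tabooMatrix_apply_le hP0) _ i j
    _ = 1 - (P ^ (k + 1)) i a := by
        rw [← sum_row_of_mem_rowStochastic (pow_mem hP (k + 1)) i, ← add_sum_erase _ _ (mem_univ a)]
        ring
    _ < 1 := sub_lt_self 1 hpos

end Taboo

end Matrix
open Matrix

section MarkovChain

variable {α : Type*} [MeasurableSpace α] [DecidableEq α]

def IsMarkovChainLaw (μ : Measure (ℕ → α)) (P : Matrix α α ℝ) (x : α) : Prop :=
  ∀ (k : ℕ) (f : ℕ → α), μ {ω | ∀ j ≤ k, ω j = f j} =
    ENNReal.ofReal ((if f 0 = x then (1 : ℝ) else 0) * ∏ j ∈ range k, P (f j) (f (j + 1)))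

variable {μ : Measure (ℕ → α)} {P : Matrix α α ℝ} {x : α}

theorem IsMarkovChainLaw.measure_cylinder (h : IsMarkovChainLaw μ P x) {k : ℕ}
    (g : Fin (k + 1) → α) :
    μ {ω | ∀ j : Fin (k + 1), ω j = g j} =
      ENNReal.ofReal ((if g 0 = x then (1 : ℝ) else 0) * P.pathWeight g) := by
  have hclamp : ∀ j : Fin (k + 1), Fin.clamp j k = j := fun j =>
    Fin.ext (by simp [Fin.coe_clamp, j.is_le])
  have hset : {ω : ℕ → α | ∀ j : Fin (k + 1), ω j = g j} =
      {ω | ∀ j ≤ k, ω j = g (Fin.clamp j k)} := by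
    ext ω
    refine ⟨fun hω j hj => ?_, fun hω j => by simpa [hclamp] using hω j j.is_le⟩
    simpa [← hclamp ⟨j, Nat.lt_succ_of_le hj⟩] using hω ⟨j, Nat.lt_succ_of_le hj⟩
  rw [hset, h k, pathWeight, ← Fin.prod_univ_eq_prod_range]
  congr 3 with j
  rw [← hclamp j.castSucc, ← hclamp j.succ]
  rfl

variable [Fintype α]

theorem IsMarkovChainLaw.measure_forall_notMem_le (h : IsMarkovChainLaw μ P x)
    (hP : ∀ i j, 0 ≤ P i j) (S : Set α) (k : ℕ) :
    μ {ω | ∀ j ≤ k, ω j ∉ S} ≤ ENNReal.ofReal ((P.tabooMatrix S ^ k *ᵥ 1) x) := by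
  set E := {ω : ℕ → α | ∀ j ≤ k, ω j ∉ S}
  set cyl : (Fin (k + 1) → α) → Set (ℕ → α) := fun g => {ω | ∀ j : Fin (k + 1), ω j = g j}
  set w : (Fin (k + 1) → α) → ℝ := fun g =>
    (if g 0 = x then 1 else 0) * (P.tabooMatrix S).pathWeight g
  have hcover : E ⊆ ⋃ g, E ∩ cyl g := fun ω hω =>
    Set.mem_iUnion.2 ⟨fun j => ω j, hω, fun _ => rfl⟩
  have hpiece : ∀ g, μ (E ∩ cyl g) ≤ ENNReal.ofReal (w g) := fun g => by
    by_cases hg : ∃ j, g j ∈ S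
    · obtain ⟨j, hj⟩ := hg
      have hempty : E ∩ cyl g = ∅ :=
        Set.eq_empty_of_forall_notMem fun ω ⟨hE, hcyl⟩ => hE j j.is_le (hcyl j ▸ hj)
      simp [hempty]
    · have hcyl := h.measure_cylinder g
      rw [← pathWeight_tabooMatrix (not_exists.1 hg)] at hcyl
      exact (measure_mono Set.inter_subset_right).trans_eq hcyl
  have hw : ∀ g, 0 ≤ w g := fun g => mul_nonneg (by positivity)
    (prod_nonneg fun _ _ => tabooMatrix_apply_nonneg hP _ _)
  calc μ E ≤ ∑ g, μ (E ∩ cyl g) := (measure_mono hcover).trans (measure_iUnion_fintype_le _ _)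
    _ ≤ ∑ g, ENNReal.ofReal (w g) := sum_le_sum fun g _ => hpiece g
    _ = ENNReal.ofReal ((P.tabooMatrix S ^ k *ᵥ 1) x) := by
      rw [← ENNReal.ofReal_sum_of_nonneg fun g _ => hw g]
      congr 1
      simpa [w, dotProduct] using
        sum_mul_pathWeight (P.tabooMatrix S) k fun z => if z = x then 1 else 0

end MarkovChain

theorem almost_every_trajectory_absorbed_general
    (n : ℕ) (P : Matrix (Fin n) (Fin n) ℝ)
    (hnonneg : ∀ i j, 0 ≤ P i j)
    (hrow : ∀ i, ∑ j, P i j = 1)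
    (hreach : ∀ i : Fin n, ∃ (k : ℕ) (a : Fin n), P a a = 1 ∧ 0 < (P ^ k) i a)
    (x : Fin n) (μ : Measure (ℕ → Fin n))
    (hcyl : ∀ (k : ℕ) (f : ℕ → Fin n),
      μ {ω | ∀ j ≤ k, ω j = f j} =
        ENNReal.ofReal
          ((if f 0 = x then (1 : ℝ) else 0) *
            ∏ j ∈ Finset.range k, P (f j) (f (j + 1)))) :
    μ {ω : ℕ → Fin n | ∀ k : ℕ, ω k ∉ {a : Fin n | P a a = 1}} = 0 := by
  set S := {a : Fin n | P a a = 1}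
  have hP : P ∈ rowStochastic ℝ (Fin n) := mem_rowStochastic_iff_sum.2 ⟨hnonneg, hrow⟩
  have hleak : ∀ i, ∃ m, (P.tabooMatrix S ^ m *ᵥ 1) i < 1 := fun i => by
    obtain ⟨k, a, ha, hpos⟩ := hreach i
    exact ⟨k + 1, tabooMatrix_pow_succ_mulVec_one_lt hP ha
      (hpos.trans_le (pow_apply_le_pow_succ_apply hnonneg ha k i))⟩
  have hdecay : Tendsto (fun k => ENNReal.ofReal ((P.tabooMatrix S ^ k *ᵥ 1) x)) atTop (𝓝 0) := by
    simpa using ENNReal.tendsto_ofReal (tendsto_pow_mulVec_one_apply_zero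
      (tabooMatrix_apply_nonneg hnonneg) (tabooMatrix_mulVec_one_le hP) hleak x)
  have hbound : ∀ k, μ {ω | ∀ k, ω k ∉ S} ≤ ENNReal.ofReal ((P.tabooMatrix S ^ k *ᵥ 1) x) :=
    fun k => by
      refine le_trans (measure_mono ?_) (IsMarkovChainLaw.measure_forall_notMem_le hcyl hnonneg S k)
      exact fun ω hω j _ => hω j
  exact nonpos_iff_eq_zero.1 (ge_of_tendsto' hdecay hbound)

/-- Let `P` be a row-stochastic matrix on `Fin n` such that from
every state some absorbing state `a` (one with `P a a = 1`) is reachable.  Let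
`μ` be the law on `(Fin n)^ℕ` of the time-homogeneous Markov chain with
transition probabilities `P` started at `x`: the (Ionescu–Tulcea) probability
measure whose cylinder probabilities are
`μ {ω | ∀ j ≤ k, ω j = f j} = [f 0 = x] · ∏_{j < k} P (f j) (f (j+1))`.
Then `μ`-almost every trajectory enters the set `A = {a | P a a = 1}` of
absorbing states: the set of trajectories avoiding `A` forever is `μ`-null. -/
theorem almost_every_trajectory_absorbed
    (n : ℕ) (P : Matrix (Fin n) (Fin n) ℝ)
    (hnonneg : ∀ i j, 0 ≤ P i j)
    (hrow : ∀ i, ∑ j, P i j = 1)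
    (hreach : ∀ i : Fin n, ∃ (k : ℕ) (a : Fin n), P a a = 1 ∧ 0 < (P ^ k) i a)
    (x : Fin n) (μ : Measure (ℕ → Fin n)) [IsProbabilityMeasure μ]
    (hcyl : ∀ (k : ℕ) (f : ℕ → Fin n),
      μ {ω | ∀ j ≤ k, ω j = f j} =
        ENNReal.ofReal
          ((if f 0 = x then (1 : ℝ) else 0) *
            ∏ j ∈ Finset.range k, P (f j) (f (j + 1)))) :
    μ {ω : ℕ → Fin n | ∀ k : ℕ, ω k ∉ {a : Fin n | P a a = 1}} = 0 :=
  almost_every_trajectory_absorbed_general n P hnonneg hrow hreach x μ hcyl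
end

section
/- Let P be an n×n row-stochastic real matrix with absorbing states A = {a | P a a = 1}, and assume every state can reach some absorbing state. Let T = Aᶜ and let Q be the T×T submatrix of P. Then the matrix I − Q is invertible, the series ∑_{k=0}^∞ Q^k converges (entrywise), and its sum N satisfies N = (I − Q)^{-1}. Consequently every entry of N is nonnegative, and n_{ij} = ∑_{k=0}^∞ (Q^k)_{ij} is the expected number of times the chain visits transient state j when started in transient state i (counting the initial state when i = j). -/
open Finset

attribute [local instance] Classical.propDecidable

lemma my_tsum_sub_succ (f : ℕ → ℝ) (hf : Summable f) :
    ∑' k, (f k - f (k + 1)) = f 0 := by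
  have h1 : Summable fun k => f (k + 1) := (summable_nat_add_iff 1).2 hf
  have hs : Summable fun k => f k - f (k + 1) := hf.sub h1
  have hT : Filter.Tendsto (fun K => ∑ k ∈ Finset.range K, (f k - f (k + 1)))
      Filter.atTop (nhds (f 0)) := by
    have h : ∀ K, ∑ k ∈ Finset.range K, (f k - f (k + 1)) = f 0 - f K := by
      intro K; exact Finset.sum_range_sub' f K
    simp only [h]
    simpa using (tendsto_const_nhds (x := f 0)).sub hf.tendsto_atTop_zero
  exact tendsto_nhds_unique hs.hasSum.tendsto_sum_nat hT

set_option maxHeartbeats 1000000 in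
/-- fundamental matrix. For an absorbing Markov chain `P` on
`Fin n` (row-stochastic, and from every state some absorbing state `a`, i.e. one
with `P a a = 1`, is reachable), let `Q` be the transient block of `P` (indexed
by the states with `P x x ≠ 1`).  Then `I - Q` is invertible, the series
`∑ₖ Q ^ k` converges entrywise with sum `N = (I - Q)⁻¹`, and every entry of `N`
(the expected number of visits to transient state `j` starting from transient
state `i`) is nonnegative. -/
theorem fundamental_matrix_of_absorbing
    (n : ℕ) (P : Matrix (Fin n) (Fin n) ℝ)
    (hnonneg : ∀ i j, 0 ≤ P i j)
    (hrow : ∀ i, ∑ j, P i j = 1)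
    (hreach : ∀ i : Fin n, ∃ (k : ℕ) (a : Fin n), P a a = 1 ∧ 0 < (P ^ k) i a)
    (Q : Matrix {x : Fin n // P x x ≠ 1} {x : Fin n // P x x ≠ 1} ℝ)
    (hQ : Q = P.submatrix Subtype.val Subtype.val) :
    IsUnit (1 - Q).det ∧
      ∀ i j : {x : Fin n // P x x ≠ 1},
        Summable (fun k : ℕ => (Q ^ k) i j) ∧
          (1 - Q)⁻¹ i j = ∑' k : ℕ, (Q ^ k) i j ∧
          0 ≤ (1 - Q)⁻¹ i j := by
  have hQdef : ∀ i j : {x : Fin n // P x x ≠ 1}, Q i j = P i.1 j.1 := by intro i j; rw [hQ]; rfl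
  -- facts about powers of P
  have hPpow : ∀ k : ℕ, (∀ i j, 0 ≤ (P ^ k) i j) ∧ (∀ i, ∑ j, (P ^ k) i j = 1) := by
    intro k
    induction k with
    | zero =>
      constructor
      · intro i j; simp [Matrix.one_apply]; split <;> norm_num
      · intro i; simp [Matrix.one_apply]
    | succ k ih =>
      constructor
      · intro i j
        rw [pow_succ, Matrix.mul_apply]
        exact Finset.sum_nonneg fun l _ => mul_nonneg (ih.1 i l) (hnonneg l j)
      · intro i
        rw [pow_succ]
        simp only [Matrix.mul_apply]
        rw [Finset.sum_comm]
        simp only [← Finset.mul_sum, hrow]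
        simpa using ih.2 i
  -- nonnegativity of Q powers
  have hQnn : ∀ (k : ℕ) (i j : {x : Fin n // P x x ≠ 1}), 0 ≤ (Q ^ k) i j := by
    intro k
    induction k with
    | zero => intro i j; simp [Matrix.one_apply]; split <;> norm_num
    | succ k ih =>
      intro i j
      rw [pow_succ, Matrix.mul_apply]
      refine Finset.sum_nonneg fun l _ => mul_nonneg (ih i l) ?_
      rw [hQdef]; exact hnonneg _ _
  -- sum over subtype ≤ sum over all, for nonneg functions
  have hsub : ∀ g : Fin n → ℝ, (∀ x, 0 ≤ g x) → ∑ x : {x : Fin n // P x x ≠ 1}, g x.1 ≤ ∑ x, g x := by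
    intro g hg
    rw [← Finset.sum_subtype (Finset.univ.filter fun x => P x x ≠ 1)
        (by simp) g]
    exact Finset.sum_le_sum_of_subset_of_nonneg (Finset.filter_subset _ _)
      (fun x _ _ => hg x)
  -- Q^k entrywise below P^k
  have hle : ∀ (k : ℕ) (i j : {x : Fin n // P x x ≠ 1}), (Q ^ k) i j ≤ (P ^ k) i.1 j.1 := by
    intro k
    induction k with
    | zero =>
      intro i j
      simp only [pow_zero, Matrix.one_apply]
      by_cases h : i = j
      · subst h; simp
      · rw [if_neg h, if_neg (fun hc => h (Subtype.ext hc))]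
    | succ k ih =>
      intro i j
      rw [pow_succ, pow_succ, Matrix.mul_apply, Matrix.mul_apply]
      calc ∑ l : {x : Fin n // P x x ≠ 1}, (Q ^ k) i l * Q l j
          ≤ ∑ l : {x : Fin n // P x x ≠ 1}, (P ^ k) i.1 l.1 * P l.1 j.1 := by
            refine Finset.sum_le_sum fun l _ => ?_
            rw [hQdef]
            exact mul_le_mul_of_nonneg_right (ih i l) (hnonneg _ _) |>.trans
              (le_refl _)
        _ ≤ ∑ l, (P ^ k) i.1 l * P l j.1 :=
            hsub (fun l => (P ^ k) i.1 l * P l j.1)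
              (fun l => mul_nonneg ((hPpow k).1 _ _) (hnonneg _ _))
  -- row sums of Q powers
  set R : {x : Fin n // P x x ≠ 1} → ℕ → ℝ := fun i k => ∑ j : {x : Fin n // P x x ≠ 1}, (Q ^ k) i j with hR
  have hR0 : ∀ i, R i 0 = 1 := by
    intro i; simp [hR, Matrix.one_apply]
  have hRnn : ∀ i k, 0 ≤ R i k := fun i k =>
    Finset.sum_nonneg fun j _ => hQnn k i j
  have hRle1 : ∀ i k, R i k ≤ 1 := by
    intro i k
    calc R i k ≤ ∑ j : {x : Fin n // P x x ≠ 1}, (P ^ k) i.1 j.1 :=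
          Finset.sum_le_sum fun j _ => hle k i j
      _ ≤ ∑ j, (P ^ k) i.1 j := hsub (fun j => (P ^ k) i.1 j) (fun j => (hPpow k).1 _ _)
      _ = 1 := (hPpow k).2 i.1
  have hkey : ∀ (k l : ℕ) (i : {x : Fin n // P x x ≠ 1}), R i (k + l) = ∑ t : {x : Fin n // P x x ≠ 1}, (Q ^ k) i t * R t l := by
    intro k l i
    simp only [hR, pow_add, Matrix.mul_apply, Finset.mul_sum]
    exact Finset.sum_comm
  have hmono : ∀ (i : {x : Fin n // P x x ≠ 1}) (k l : ℕ), R i (k + l) ≤ R i k := by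
    intro i k l
    rw [hkey]
    calc ∑ t : {x : Fin n // P x x ≠ 1}, (Q ^ k) i t * R t l ≤ ∑ t : {x : Fin n // P x x ≠ 1}, (Q ^ k) i t * 1 :=
          Finset.sum_le_sum fun t _ =>
            mul_le_mul_of_nonneg_left (hRle1 t l) (hQnn k i t)
      _ = R i k := by simp [hR]
  -- from every transient state, some power has row sum < 1
  have hex : ∀ i : {x : Fin n // P x x ≠ 1}, ∃ k, R i k < 1 := by
    intro i
    obtain ⟨k, a, ha, hpos⟩ := hreach i.1
    refine ⟨k, ?_⟩
    have haT : a ∉ Finset.univ.filter fun x : Fin n => P x x ≠ 1 := by simp [ha]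
    calc R i k ≤ ∑ j : {x : Fin n // P x x ≠ 1}, (P ^ k) i.1 j.1 :=
          Finset.sum_le_sum fun j _ => hle k i j
      _ = ∑ j ∈ Finset.univ.filter fun x => P x x ≠ 1, (P ^ k) i.1 j :=
          (Finset.sum_subtype (s := Finset.univ.filter fun x => P x x ≠ 1)
            (fun x => by simp) (fun j => (P ^ k) i.1 j)).symm
      _ ≤ ∑ j ∈ Finset.univ.erase a, (P ^ k) i.1 j := by
          refine Finset.sum_le_sum_of_subset_of_nonneg ?_
            (fun x _ _ => (hPpow k).1 _ _)
          intro x hx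
          simp only [Finset.mem_filter, Finset.mem_univ, true_and] at hx
          simp only [Finset.mem_erase, Finset.mem_univ, and_true]
          rintro rfl; exact hx ha
      _ = (∑ j, (P ^ k) i.1 j) - (P ^ k) i.1 a := by
          rw [Finset.sum_erase_eq_sub (Finset.mem_univ a)]
      _ < 1 := by rw [(hPpow k).2 i.1]; linarith
    -- split on whether there are any transient states
  rcases isEmpty_or_nonempty {x : Fin n // P x x ≠ 1} with hE | hNE
  · exact ⟨by simp [Matrix.det_isEmpty], fun i => isEmptyElim i⟩
  -- nonempty transient set
  choose m hm using hex
  set M := Finset.univ.sup m with hMdef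
  have hmM : ∀ i, m i ≤ M := fun i => Finset.le_sup (Finset.mem_univ i)
  have hRM : ∀ i, R i M < 1 := by
    intro i
    have h2 := hmono i (m i) (M - m i)
    rw [Nat.add_sub_cancel' (hmM i)] at h2
    exact lt_of_le_of_lt h2 (hm i)
  have hM0 : M ≠ 0 := by
    intro h0
    obtain ⟨i0⟩ := hNE
    have := hRM i0
    rw [h0, hR0 i0] at this
    exact lt_irrefl 1 this
  have hMpos : (0:ℝ) < (M:ℝ) := by exact_mod_cast Nat.pos_of_ne_zero hM0
  set c' : ℝ := max (Finset.univ.sup' Finset.univ_nonempty fun i => R i M) (1/2) with hc'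
  have hc'0 : (0:ℝ) < c' := lt_of_lt_of_le (by norm_num) (le_max_right _ _)
  have hc'1 : c' < 1 := by
    refine max_lt ?_ (by norm_num)
    exact (Finset.sup'_lt_iff _).2 fun i _ => hRM i
  have hRc : ∀ i, R i M ≤ c' := fun i =>
    le_trans (Finset.le_sup' (fun i => R i M) (Finset.mem_univ i)) (le_max_left _ _)
  have hdecay : ∀ (t : ℕ) (i), R i (M * t) ≤ c' ^ t := by
    intro t
    induction t with
    | zero => intro i; simp [hR0]
    | succ t ih =>
      intro i
      have hmul : M * (t + 1) = M * t + M := by ring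
      rw [hmul, hkey]
      calc ∑ u : {x : Fin n // P x x ≠ 1}, (Q ^ (M * t)) i u * R u M
          ≤ ∑ u : {x : Fin n // P x x ≠ 1}, (Q ^ (M * t)) i u * c' :=
            Finset.sum_le_sum fun u _ =>
              mul_le_mul_of_nonneg_left (hRc u) (hQnn _ i u)
        _ = R i (M * t) * c' := by rw [← Finset.sum_mul]
        _ ≤ c' ^ t * c' := mul_le_mul_of_nonneg_right (ih i) hc'0.le
        _ = c' ^ (t + 1) := (pow_succ c' t).symm
  set r : ℝ := c' ^ ((M:ℝ)⁻¹) with hrdef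
  have hr0 : 0 ≤ r := Real.rpow_nonneg hc'0.le _
  have hr1 : r < 1 := Real.rpow_lt_one hc'0.le hc'1 (inv_pos.2 hMpos)
  have hRk : ∀ i (k : ℕ), R i k ≤ c' ^ (k / M) := by
    intro i k
    have h1 : M * (k / M) + k % M = k := Nat.div_add_mod k M
    calc R i k = R i (M * (k / M) + k % M) := by rw [h1]
      _ ≤ R i (M * (k / M)) := hmono i _ _
      _ ≤ c' ^ (k / M) := hdecay _ i
  have hgeo : ∀ k : ℕ, (c' : ℝ) ^ (k / M) ≤ c'⁻¹ * r ^ k := by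
    intro k
    have hdiv : (k : ℝ) * (M:ℝ)⁻¹ - 1 ≤ ((k / M : ℕ) : ℝ) := by
      have h2 : (k:ℝ) < (M:ℝ) * ((k / M : ℕ) : ℝ) + M := by
        have h3 : k < M * (k / M) + M := by
          have h5 := Nat.div_add_mod k M
          have h6 := Nat.mod_lt k (Nat.pos_of_ne_zero hM0)
          omega
        exact_mod_cast h3
      have h4 : (k:ℝ) * (M:ℝ)⁻¹ < ((k / M : ℕ) : ℝ) + 1 := by
        rw [← div_eq_mul_inv, div_lt_iff₀ hMpos]
        nlinarith
      linarith
    calc (c' : ℝ) ^ (k / M) = c' ^ (((k / M : ℕ) : ℝ)) := (Real.rpow_natCast _ _).symm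
      _ ≤ c' ^ ((k:ℝ) * (M:ℝ)⁻¹ - 1) :=
          Real.rpow_le_rpow_of_exponent_ge hc'0 hc'1.le hdiv
      _ = c'⁻¹ * r ^ k := by
          rw [Real.rpow_sub hc'0, Real.rpow_one, div_eq_inv_mul, hrdef,
            ← Real.rpow_natCast (c' ^ ((M:ℝ)⁻¹)) k, ← Real.rpow_mul hc'0.le]
          ring_nf
  have hsumgeo : Summable fun k : ℕ => c'⁻¹ * r ^ k :=
    (summable_geometric_of_lt_one hr0 hr1).mul_left _
  have hsum : ∀ i j, Summable fun k : ℕ => (Q ^ k) i j := by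
    intro i j
    refine Summable.of_nonneg_of_le (fun k => hQnn k i j) (fun k => ?_) hsumgeo
    refine le_trans (le_trans ?_ (hRk i k)) (hgeo k)
    exact Finset.single_le_sum (fun j' _ => hQnn k i j') (Finset.mem_univ j)
  -- the fundamental matrix as entrywise sum of the geometric series
  set S : Matrix {x : Fin n // P x x ≠ 1} {x : Fin n // P x x ≠ 1} ℝ :=
    Matrix.of (fun i j => ∑' k : ℕ, (Q ^ k) i j) with hS
  have hSapp : ∀ i j, S i j = ∑' k : ℕ, (Q ^ k) i j := fun i j => rfl
  have hleft : (1 - Q) * S = 1 := by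
    ext i j
    rw [Matrix.mul_apply]
    have h1 : ∀ l, (1 - Q) i l * S l j = ∑' k : ℕ, (1 - Q) i l * (Q ^ k) l j := by
      intro l
      rw [hSapp]
      exact (Summable.tsum_mul_left _ (hsum l j)).symm
    have h2 : ∀ k : ℕ, (∑ l, (1 - Q) i l * (Q ^ k) l j)
        = (Q ^ k) i j - (Q ^ (k + 1)) i j := by
      intro k
      rw [← Matrix.mul_apply, Matrix.sub_mul, Matrix.one_mul, ← pow_succ',
        Matrix.sub_apply]
    calc ∑ l, (1 - Q) i l * S l j
        = ∑ l, ∑' k : ℕ, (1 - Q) i l * (Q ^ k) l j := Finset.sum_congr rfl fun l _ => h1 l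
      _ = ∑' k : ℕ, ∑ l, (1 - Q) i l * (Q ^ k) l j :=
          (Summable.tsum_finsetSum fun l _ => (hsum l j).mul_left _).symm
      _ = ∑' k : ℕ, ((Q ^ k) i j - (Q ^ (k + 1)) i j) := tsum_congr h2
      _ = (Q ^ 0) i j := my_tsum_sub_succ (fun k => (Q ^ k) i j) (hsum i j)
      _ = (1 : Matrix {x : Fin n // P x x ≠ 1} {x : Fin n // P x x ≠ 1} ℝ) i j := by
          rw [pow_zero]
  have hinv : (1 - Q)⁻¹ = S := Matrix.inv_eq_right_inv hleft
  refine ⟨Matrix.isUnit_det_of_right_inverse hleft, fun i j => ⟨hsum i j, ?_, ?_⟩⟩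
  · rw [hinv, hSapp]
  · rw [hinv, hSapp]
    exact tsum_nonneg fun k => hQnn k i j
end

section
/- Let P be an n×n row-stochastic real matrix with absorbing states A = {a | P a a = 1}, and assume every state can reach some absorbing state. Let T = Aᶜ, let Q be the T×T submatrix of P, and let N = (I − Q)^{-1} be the fundamental matrix. Define the vector t indexed by T by t_i = ∑_{j ∈ T} n_{ij}, i.e., t = N·c where c is the all-ones column vector on T. Then t_i = ∑_{k=0}^∞ ∑_{j ∈ T} (Q^k)_{ij} (the series converges) and t satisfies the linear system (I − Q)·t = c, equivalently t = c + Q·t; t_i is the expected number of steps before the chain is absorbed, given that it starts in transient state i. -/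
open Finset

attribute [local instance] Classical.propDecidable

/-! Every transient state reaches an absorbing state, so for each row `i` some power `Q ^ k` has
`i`-th row sum `< 1`; since the row sums of `Q ^ k` decrease with `k`, a single `m` works for all
rows. In the `ℓ∞ → ℓ∞` operator norm this says `‖Q‖ ≤ 1` and `‖Q ^ m‖ < 1`, so `k ↦ ‖Q ^ k‖` is
antitone and decays geometrically along the multiples of `m`. Hence the Neumann series `∑ Q ^ k`
converges, necessarily to `(1 - Q)⁻¹`, and `t` is its vector of row sums. -/

theorem summable_pow_of_norm_le_one_of_norm_pow_lt_one {R : Type*} [NormedRing R]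
    [CompleteSpace R] {x : R} (hx : ‖x‖ ≤ 1) {m : ℕ} [NeZero m] (hxm : ‖x ^ m‖ < 1) :
    Summable (x ^ ·) := by
  refine Summable.of_norm ?_
  have hanti : Antitone (‖x ^ ·‖) := antitone_nat_of_succ_le fun k => by
    simpa [pow_succ] using
      (norm_mul_le (x ^ k) x).trans (mul_le_of_le_one_right (norm_nonneg _) hx)
  rw [← summable_indicator_mod_iff hanti (0 : ZMod m), ← Nat.cast_zero,
    summable_indicator_mod_iff_summable, ← summable_nat_add_iff 1]
  refine ((summable_geometric_of_lt_one (norm_nonneg _) hxm).mul_left ‖x ^ m‖).of_nonneg_of_le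
    (fun _ => norm_nonneg _) fun q => ?_
  rw [add_zero, pow_mul, ← pow_succ']
  exact norm_pow_le' _ q.succ_pos

theorem Fintype.sum_comp_le_sum_of_injective {κ ι M : Type*} [Fintype κ] [AddCommMonoid M]
    [PartialOrder M] [IsOrderedAddMonoid M] {e : κ → ι} (he : Function.Injective e)
    {s : Finset ι} (hs : ∀ l, e l ∈ s) {g : ι → M} (hg : ∀ x ∈ s, 0 ≤ g x) :
    ∑ l, g (e l) ≤ ∑ x ∈ s, g x :=
  (sum_map univ ⟨e, he⟩ g).symm.trans_le <|
    sum_le_sum_of_subset_of_nonneg (by simpa [subset_iff]) fun x hx _ => hg x hx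

theorem HasSum.matrix_sum_apply {X m n R : Type*} [Fintype n] [AddCommMonoid R]
    [TopologicalSpace R] [ContinuousAdd R] {f : X → Matrix m n R} {a : Matrix m n R}
    (hf : HasSum f a) (i : m) : HasSum (fun x => ∑ j, f x i j) (∑ j, a i j) :=
  hasSum_sum fun j _ => Pi.hasSum.1 (Pi.hasSum.1 hf i) j

section LinftyOp

attribute [local instance] Matrix.linftyOpSeminormedAddCommGroup

variable {m n α : Type*} [Fintype m] [Fintype n] [SeminormedAddCommGroup α]

theorem Matrix.linfty_opNorm_le_iff {A : Matrix m n α} {r : ℝ} (hr : 0 ≤ r) :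
    ‖A‖ ≤ r ↔ ∀ i, ∑ j, ‖A i j‖ ≤ r := by
  change ‖fun i => WithLp.toLp 1 (A i)‖ ≤ r ↔ _
  simp [pi_norm_le_iff_of_nonneg hr, PiLp.norm_eq_of_L1]

theorem Matrix.linfty_opNorm_lt_iff {A : Matrix m n α} {r : ℝ} (hr : 0 < r) :
    ‖A‖ < r ↔ ∀ i, ∑ j, ‖A i j‖ < r := by
  change ‖fun i => WithLp.toLp 1 (A i)‖ < r ↔ _
  simp [pi_norm_lt_iff hr, PiLp.norm_eq_of_L1]

end LinftyOp

namespace Matrix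

variable {ι : Type*} [Fintype ι] [DecidableEq ι] {A : Matrix ι ι ℝ}

theorem antitone_sum_pow_apply (hA : ∀ i j, 0 ≤ A i j) (hrow : ∀ i, ∑ j, A i j ≤ 1) (i : ι) :
    Antitone fun k => ∑ j, (A ^ k) i j := antitone_nat_of_succ_le fun k => by
  simp only [pow_succ, mul_apply]
  rw [sum_comm]
  simp only [← mul_sum]
  exact sum_le_sum fun l _ => mul_le_of_le_one_right (pow_apply_nonneg hA k i l) (hrow l)

theorem pow_submatrix_apply_le {κ : Type*} [Fintype κ] [DecidableEq κ] (hA : ∀ i j, 0 ≤ A i j)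
    {e : κ → ι} (he : Function.Injective e) (k : ℕ) (i j : κ) :
    ((A.submatrix e e) ^ k) i j ≤ (A ^ k) (e i) (e j) := by
  induction k generalizing j with
  | zero => simp [one_apply, he.eq_iff]
  | succ k ih =>
    rw [pow_succ, pow_succ, mul_apply, mul_apply]
    calc ∑ l, ((A.submatrix e e) ^ k) i l * A (e l) (e j)
        ≤ ∑ l, (A ^ k) (e i) (e l) * A (e l) (e j) :=
          sum_le_sum fun l _ => mul_le_mul_of_nonneg_right (ih l) (hA _ _)
      _ ≤ ∑ x, (A ^ k) (e i) x * A x (e j) :=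
          Fintype.sum_comp_le_sum_of_injective (g := fun x => (A ^ k) (e i) x * A x (e j)) he
            (fun _ => mem_univ _) fun x _ => mul_nonneg (pow_apply_nonneg hA k _ _) (hA _ _)

theorem sum_pow_submatrix_apply_lt_one {κ : Type*} [Fintype κ] [DecidableEq κ]
    (hA : A ∈ rowStochastic ℝ ι) {e : κ → ι} (he : Function.Injective e) {a : ι}
    (ha : a ∉ Set.range e) {k : ℕ} {i : κ} (hpos : 0 < (A ^ k) (e i) a) :
    ∑ j, ((A.submatrix e e) ^ k) i j < 1 := by
  have hAk := pow_mem hA k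
  calc ∑ j, ((A.submatrix e e) ^ k) i j
      ≤ ∑ j, (A ^ k) (e i) (e j) :=
        sum_le_sum fun j _ => pow_submatrix_apply_le (fun _ _ => nonneg_of_mem_rowStochastic hA)
          he k i j
    _ ≤ ∑ x ∈ univ.erase a, (A ^ k) (e i) x :=
        Fintype.sum_comp_le_sum_of_injective he
          (fun l => mem_erase.2 ⟨fun h => ha ⟨l, h⟩, mem_univ _⟩)
          fun _ _ => nonneg_of_mem_rowStochastic hAk
    _ = 1 - (A ^ k) (e i) a := by
        rw [sum_erase_eq_sub (mem_univ a), sum_row_of_mem_rowStochastic hAk]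
    _ < 1 := sub_lt_self 1 hpos

section LinftyOp

attribute [local instance] Matrix.linftyOpNormedRing Matrix.linftyOpNormedAlgebra

theorem summable_pow_of_nonneg_of_exists_sum_pow_lt_one (hA : ∀ i j, 0 ≤ A i j)
    (hrow : ∀ i, ∑ j, A i j ≤ 1) (hleak : ∀ i, ∃ k, ∑ j, (A ^ k) i j < 1) : Summable (A ^ ·) := by
  choose k hk using hleak
  have : NeZero (univ.sup k + 1) := ⟨by omega⟩
  -- instance search misses this: the norm's uniformity is not reducibly the product one
  have : CompleteSpace (Matrix ι ι ℝ) := FiniteDimensional.complete ℝ _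
  refine summable_pow_of_norm_le_one_of_norm_pow_lt_one (m := univ.sup k + 1)
    ((linfty_opNorm_le_iff zero_le_one).2 fun i => ?_)
    ((linfty_opNorm_lt_iff zero_lt_one).2 fun i => ?_)
  · simpa only [Real.norm_of_nonneg (hA i _)] using hrow i
  · simp only [Real.norm_of_nonneg (pow_apply_nonneg hA _ i _)]
    exact (antitone_sum_pow_apply hA hrow i
      ((le_sup (mem_univ i)).trans (Nat.le_succ _))).trans_lt (hk i)

end LinftyOp

end Matrix

/-- expected steps to absorption. For an absorbing Markov
chain `P` on `Fin n` with transient block `Q` and fundamental matrix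
`N = (I - Q)⁻¹`, the vector `t = N · c` (where `c` is the all-ones vector on the
transient states), i.e. `t i = ∑_{j} n_{i j}`, satisfies
`t i = ∑_{k=0}^∞ ∑_{j} (Q ^ k)_{i j}` (the series converging), as well as the
linear system `(I - Q) t = c`, equivalently `t = c + Q t`; `t i` is the expected
number of steps before absorption starting from transient state `i`. -/
theorem expected_steps_to_absorption
    (n : ℕ) (P : Matrix (Fin n) (Fin n) ℝ)
    (hnonneg : ∀ i j, 0 ≤ P i j)
    (hrow : ∀ i, ∑ j, P i j = 1)
    (hreach : ∀ i : Fin n, ∃ (k : ℕ) (a : Fin n), P a a = 1 ∧ 0 < (P ^ k) i a)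
    (Q : Matrix {x : Fin n // P x x ≠ 1} {x : Fin n // P x x ≠ 1} ℝ)
    (hQ : Q = P.submatrix Subtype.val Subtype.val)
    (t : {x : Fin n // P x x ≠ 1} → ℝ)
    (ht : t = (1 - Q)⁻¹.mulVec (fun _ => 1)) :
    (∀ i, t i = ∑ j, (1 - Q)⁻¹ i j) ∧
      (∀ i, Summable (fun k : ℕ => ∑ j, (Q ^ k) i j) ∧
        t i = ∑' k : ℕ, ∑ j, (Q ^ k) i j) ∧
      (1 - Q).mulVec t = (fun _ => 1) ∧
      t = (fun _ => 1) + Q.mulVec t := by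
  have hP : P ∈ Matrix.rowStochastic ℝ (Fin n) :=
    Matrix.mem_rowStochastic_iff_sum.2 ⟨hnonneg, hrow⟩
  have hQ_nonneg : ∀ i j, 0 ≤ Q i j := hQ ▸ fun i j => hnonneg _ _
  have hQ_row : ∀ i, ∑ j, Q i j ≤ 1 := hQ ▸ fun i =>
    (Fintype.sum_comp_le_sum_of_injective Subtype.val_injective (fun _ => mem_univ _)
      fun x _ => hnonneg i.1 x).trans_eq (hrow i)
  have hQ_leak : ∀ i, ∃ k, ∑ j, (Q ^ k) i j < 1 := fun i => by
    obtain ⟨k, a, ha, hpos⟩ := hreach i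
    exact ⟨k, hQ ▸ Matrix.sum_pow_submatrix_apply_lt_one hP Subtype.val_injective
      (by rintro ⟨j, rfl⟩; exact j.2 ha) hpos⟩
  have hsum := Matrix.summable_pow_of_nonneg_of_exists_sum_pow_lt_one hQ_nonneg hQ_row hQ_leak
  have hN : (1 - Q)⁻¹ = ∑' k, Q ^ k := Matrix.inv_eq_right_inv hsum.one_sub_mul_tsum_pow
  have ht_row : ∀ i, t i = ∑ j, (1 - Q)⁻¹ i j := fun i => by simp [ht, Matrix.mulVec, dotProduct]
  have ht_sys : (1 - Q).mulVec t = fun _ => 1 := by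
    rw [ht, Matrix.mulVec_mulVec, hN, hsum.one_sub_mul_tsum_pow, Matrix.one_mulVec]
  refine ⟨ht_row, fun i => ?_, ht_sys, ?_⟩
  · have h := hN ▸ hsum.hasSum.matrix_sum_apply i
    exact ⟨h.summable, (ht_row i).trans h.tsum_eq.symm⟩
  · rwa [Matrix.sub_mulVec, Matrix.one_mulVec, sub_eq_iff_eq_add] at ht_sys
end
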